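/- There is an absolute constant c > 0 such that for every caterpillar G = C(m_1,...,m_n) with n spine vertices, and every pair of search trees T_1, T_2 on G in which every leg node is bound (i.e., no leg node has children), T_1 can be transformed into T_2 using at most c·n rotations. -/

import Mathlib

/-- A rooted tree (or the empty tree) on a subset `supp` of the vertex type `V`,
represented by parent pointers. -/
structure RTree (V : Type) where
  supp : Finset V
  parent : V → Option V
  parent_eq_none : ∀ v ∉ supp, parent v = none
  mem_of_parent : ∀ {v w : V}, parent v = some w → v ∈ supp ∧ w ∈ supp
  root_unique : ∀ v ∈ supp, ∀ w ∈ supp, parent v = none → parent w = none → v = w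
  reaches_root : ∀ v ∈ supp, ∃ r ∈ supp, parent r = none ∧
    Relation.ReflTransGen (fun a b => parent a = some b) v r

namespace RTree

variable {V : Type}

/-- `T.Anc a v` : `a` is an ancestor of `v` in `T` (possibly `a = v`). -/
def Anc (T : RTree V) (a v : V) : Prop :=
  Relation.ReflTransGen (fun x y => T.parent x = some y) v a

/-- `a` is a strict ancestor of `v`. -/
def StrictAnc (T : RTree V) (a v : V) : Prop := a ≠ v ∧ T.Anc a v

/-- The set of vertices of the subtree rooted at `a` (the descendants of `a`). -/
def descSet (T : RTree V) (a : V) : Set V := {v | T.Anc a v}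

/-- The depth of a node: the number of nodes on the path from the root to it
(the root has depth 1). -/
noncomputable def depth (T : RTree V) (v : V) : ℕ := Set.ncard {a | T.Anc a v}

def IsRoot (T : RTree V) (r : V) : Prop := r ∈ T.supp ∧ T.parent r = none

end RTree

/-- The restriction of a graph to a set of vertices (keeping the ambient vertex type). -/
def restrictG {V : Type} (G : SimpleGraph V) (U : Set V) : SimpleGraph V where
  Adj a b := G.Adj a b ∧ a ∈ U ∧ b ∈ U
  symm := ⟨fun a b ⟨h, ha, hb⟩ => ⟨h.symm, hb, ha⟩⟩
  loopless := ⟨fun a ⟨h, _, _⟩ => G.loopless.irrefl a h⟩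

/-- `T` is a search tree on the induced subgraph `G[U]`: its nodes are the vertices of `U`,
the subtree of every node induces a connected subgraph, and every edge of `G[U]` joins
two comparable nodes of `T`. -/
def IsSTGOn {V : Type} (G : SimpleGraph V) (U : Finset V) (T : RTree V) : Prop :=
  T.supp = U ∧
  (∀ v ∈ U, ((restrictG G ↑U).induce (T.descSet v)).Connected) ∧
  (∀ u v : V, u ∈ U → v ∈ U → G.Adj u v → T.Anc u v ∨ T.Anc v u)

/-- `T` is a search tree on the graph `G`. -/
def IsSTG {V : Type} [Fintype V] (G : SimpleGraph V) (T : RTree V) : Prop :=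
  IsSTGOn G Finset.univ T

/-- `T'` is obtained from `T` by rotating the edge `(p, c)` of `T`, where `p` is
the parent of `c`: `c` replaces `p` (becoming a child of `p`'s former parent, or the
root if `p` was the root), `p` becomes a child of `c`, `p` keeps its other children,
and each child `x` of `c` whose subtree contains a vertex of `G` adjacent to `p`
becomes a child of `p` (the other children of `c` stay children of `c`). -/
def IsRotationAt {V : Type} (G : SimpleGraph V) (T T' : RTree V) (p c : V) : Prop :=
  T.parent c = some p ∧
  T'.supp = T.supp ∧
  T'.parent c = T.parent p ∧
  T'.parent p = some c ∧
  (∀ x : V, x ≠ p → T.parent x = some c →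
    ((∃ u ∈ T.descSet x, G.Adj u p) → T'.parent x = some p) ∧
    (¬(∃ u ∈ T.descSet x, G.Adj u p) → T'.parent x = some c)) ∧
  (∀ x : V, x ≠ c → x ≠ p → T.parent x ≠ some c → T'.parent x = T.parent x)

/-- `T'` is obtained from `T` by a single rotation. -/
def IsRotation {V : Type} (G : SimpleGraph V) (T T' : RTree V) : Prop :=
  ∃ p c, IsRotationAt G T T' p c

/-- `T2` can be obtained from `T1` by exactly `k` rotations. -/
def ReachesIn {V : Type} (G : SimpleGraph V) : ℕ → RTree V → RTree V → Prop
  | 0, T1, T2 => T1 = T2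
  | k+1, T1, T2 => ∃ T', IsRotation G T1 T' ∧ ReachesIn G k T' T2

/-- Vertex type of the caterpillar `C(m_1, …, m_n)`: spine vertices `inl i` and
leg vertices `inr ⟨i, j⟩`. -/
abbrev CatV (n : ℕ) (m : Fin n → ℕ) : Type := Fin n ⊕ (Σ i : Fin n, Fin (m i))

/-- The caterpillar tree `C(m_1, …, m_n)`: the spine `s_1 - s_2 - ⋯ - s_n` is a path,
and leg `ℓ_{i,j}` is adjacent to `s_i`. -/
def caterpillar (n : ℕ) (m : Fin n → ℕ) : SimpleGraph (CatV n m) where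
  Adj x y :=
    match x, y with
    | Sum.inl i, Sum.inl j => i.val + 1 = j.val ∨ j.val + 1 = i.val
    | Sum.inl i, Sum.inr l => l.1 = i
    | Sum.inr l, Sum.inl i => l.1 = i
    | Sum.inr _, Sum.inr _ => False
  symm := ⟨by rintro (i | l) (j | l') h <;> simp_all <;> tauto⟩
  loopless := ⟨by rintro (i | l) h <;> simp_all⟩

/-- The (base 2) Shannon entropy `H(m_1, …, m_n) = ∑_{i : m_i > 0} (m_i/m) log (m/m_i)`. -/
noncomputable def shannonH {n : ℕ} (m : Fin n → ℕ) : ℝ :=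
  ∑ i, if 0 < m i then
    ((m i : ℝ) / (∑ j, (m j : ℝ))) * Real.logb 2 ((∑ j, (m j : ℝ)) / (m i : ℝ))
  else 0

/-- The parent function of the search tree `A(S, π)` on the caterpillar: the legs form a
path at the top of the tree, ordered bottom-to-top according to `π`, and the spine nodes
hang below, arranged according to the BST `S`. -/
def AParent {n : ℕ} {m : Fin n → ℕ} (S : RTree (Fin n))
    (π : Fin (∑ i, m i) ≃ (Σ i : Fin n, Fin (m i))) :
    CatV n m → Option (CatV n m) :=
  fun x => match x with
  | Sum.inl i =>
      match S.parent i with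
      | some j => some (Sum.inl j)
      | none => if h : 0 < ∑ i, m i then some (Sum.inr (π ⟨0, h⟩)) else none
  | Sum.inr l =>
      if h : (π.symm l).val + 1 < ∑ i, m i then
        some (Sum.inr (π ⟨(π.symm l).val + 1, h⟩))
      else none

/-- `T = A(S, π)`. -/
def IsA {n : ℕ} {m : Fin n → ℕ} (S : RTree (Fin n))
    (π : Fin (∑ i, m i) ≃ (Σ i : Fin n, Fin (m i))) (T : RTree (CatV n m)) : Prop :=
  T.supp = Finset.univ ∧ T.parent = AParent S π

/-- The parent function of the search tree `B(S)` on the caterpillar: every leg `ℓ_{i,j}`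
is a (childless) child of `s_i`, and the spine nodes are arranged according to `S`. -/
def BParent {n : ℕ} {m : Fin n → ℕ} (S : RTree (Fin n)) :
    CatV n m → Option (CatV n m) :=
  fun x => match x with
  | Sum.inl i => (S.parent i).map Sum.inl
  | Sum.inr l => some (Sum.inl l.1)

/-- `T = B(S)`. -/
def IsB {n : ℕ} {m : Fin n → ℕ} (S : RTree (Fin n)) (T : RTree (CatV n m)) : Prop :=
  T.supp = Finset.univ ∧ T.parent = BParent S

/-- `σ(π)`: the sequence of spine indices obtained from the leg ordering `π` by replacing
each leg `ℓ_{i,j}` with `i`. -/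
def sigmaOf {n : ℕ} {m : Fin n → ℕ}
    (π : Fin (∑ i, m i) ≃ (Σ i : Fin n, Fin (m i))) : List (Fin n) :=
  List.ofFn (fun j => (π j).1)

/-- Every leg node of `T` is bound, i.e. no leg node has a child. -/
def noFreeLegs {n : ℕ} {m : Fin n → ℕ} (T : RTree (CatV n m)) : Prop :=
  ∀ (x : CatV n m) (l : Σ i : Fin n, Fin (m i)), T.parent x ≠ some (Sum.inr l)

open Classical in
/-- The number of adjacent pairs in a list satisfying `P`. -/
noncomputable def pairAlt {α : Type} (P : α → α → Prop) : List α → ℕ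
  | [] => 0
  | [_] => 0
  | a :: b :: t => (if P a b then 1 else 0) + pairAlt P (b :: t)

open Classical in
/-- Wilber's quantity `λ(S, u, σ)`: 0 if `u` has at most one child; otherwise the number
of adjacent pairs in the restriction of `σ` to the subtree of `u` that do not both lie in
the subtree of one child of `u` and are not both equal to `u`. -/
noncomputable def wilberLam {n : ℕ} (S : RTree (Fin n)) (u : Fin n) (σ : List (Fin n)) : ℕ :=
  if (∃ v w : Fin n, v ≠ w ∧ S.parent v = some u ∧ S.parent w = some u) then
    pairAlt (fun x y =>
      ¬((x = u ∧ y = u) ∨ ∃ ch, S.parent ch = some u ∧ S.Anc ch x ∧ S.Anc ch y))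
      (σ.filter (fun x => decide (S.Anc u x)))
  else 0

/-- `λ'(S, u, σ) = λ(S, u, σ)` plus the number of occurrences of `u` in `σ`. -/
noncomputable def wilberLam' {n : ℕ} (S : RTree (Fin n)) (u : Fin n)
    (σ : List (Fin n)) : ℕ :=
  wilberLam S u σ + σ.count u

/-- Wilber's first lower bound `Λ'(S, σ) = ∑_u λ'(S, u, σ)`. -/
noncomputable def wilberL' {n : ℕ} (S : RTree (Fin n)) (σ : List (Fin n)) : ℕ :=
  ∑ u : Fin n, wilberLam' S u σ

/-- `P` is the projection `T[U]` of `T` onto `U`: its nodes are the nodes of `T` in `U`,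
and the parent of `u` in `P` is the nearest strict ancestor of `u` in `T` that lies
in `U` (which is exactly the result of pruning the vertices outside `U` one by one). -/
def IsProjOn {V : Type} [DecidableEq V] (T : RTree V) (U : Finset V) (P : RTree V) : Prop :=
  P.supp = T.supp ∩ U ∧
  ∀ u w : V, P.parent u = some w ↔
    (u ∈ U ∧ w ∈ U ∧ T.StrictAnc w u ∧ ∀ z ∈ U, T.StrictAnc z u → T.Anc z w)

/-- `P` is obtained from `T` by pruning the vertex `v`. -/
def IsPruneOf {V : Type} [DecidableEq V] (T : RTree V) (v : V) (P : RTree V) : Prop :=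
  IsProjOn T (T.supp.erase v) P

/-- `PruneSeq T l P`: `P` is obtained from `T` by successively pruning the
vertices in the list `l`, in order. -/
def PruneSeq {V : Type} [DecidableEq V] : RTree V → List V → RTree V → Prop
  | T, [], P => P = T
  | T, v :: rest, P => ∃ P', IsPruneOf T v P' ∧ PruneSeq P' rest P

/-- The number of alternations (edges whose endpoints get different colors under `f`)
on the path from the root to `z`. -/
noncomputable def altAt {V K : Type} (f : V → K) (T : RTree V) (z : V) : ℕ :=
  Set.ncard {x | T.Anc x z ∧ ∃ y, T.parent x = some y ∧ f x ≠ f y}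

/-- The alternation number of `T` w.r.t. the coloring `f`: the maximum number of
alternations on a root-to-node path. -/
noncomputable def altNum {V K : Type} (f : V → K) (T : RTree V) : ℕ :=
  T.supp.sup (fun z => altAt f T z)

/-! Every search tree on the caterpillar whose legs are bound hangs each leg from its own
spine vertex, and its spine part is a binary search tree on the path `s_1 - ⋯ - s_n`:
spine neighbours are comparable and every subtree meets the spine in an interval.
Call right spine the spine vertices all of whose other ancestors have smaller index. Unless the
whole spine is right spine, i.e. the tree is the path `s_1 → s_2 → ⋯ → s_n` with the legs
attached, some spine vertex `c` off the right spine has its parent `p` on it, and `c < p`.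
Rotating `c` over `p` keeps the shape, is undone by the reverse rotation, and adds `c` to
the right spine. So at most `n` rotations lead from any such tree to that path, and `T_1`
reaches `T_2` through it in at most `2n` rotations. -/

open Relation Sum

theorem reflTransGen_of_eqOn {V : Type} {f g : V → Option V} {S : Set V}
    (hS : ∀ v ∈ S, ∀ w, f v = some w → w ∈ S) (hfg : ∀ v ∈ S, f v = g v) {v w : V}
    (hv : v ∈ S) (h : ReflTransGen (fun a b => f a = some b) v w) :
    ReflTransGen (fun a b => g a = some b) v w := by
  induction h using ReflTransGen.head_induction_on with
  | refl => rfl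
  | head hab _ ih => exact .head (hfg _ hv ▸ hab) (ih (hS _ hv _ hab))

namespace RTree

variable {V : Type} {T : RTree V} {a b r v x y : V}

theorem anc_refl (T : RTree V) (v : V) : T.Anc v v := .refl

theorem Anc.trans (h₁ : T.Anc a b) (h₂ : T.Anc b v) : T.Anc a v := ReflTransGen.trans h₂ h₁

theorem anc_of_parent_eq (h : T.parent x = some y) : T.Anc y x := .single h

theorem parent_rightUnique : Relator.RightUnique (fun x y => T.parent x = some y) :=
  fun _ _ _ h₁ h₂ => Option.some_injective _ (h₁.symm.trans h₂)

theorem anc_iff_of_parent_eq (h : T.parent x = some y) : T.Anc a x ↔ a = x ∨ T.Anc a y := by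
  refine ⟨fun hax => ?_, ?_⟩
  · rcases ReflTransGen.cases_head hax with rfl | ⟨z, hz, hza⟩
    · exact .inl rfl
    · exact .inr (parent_rightUnique h hz ▸ hza)
  · rintro (rfl | hay)
    exacts [T.anc_refl a, hay.trans (anc_of_parent_eq h)]

theorem eq_of_anc_of_parent_eq_none (hr : T.parent r = none) (h : T.Anc a r) : a = r := by
  rcases ReflTransGen.cases_head h with rfl | ⟨z, hz, -⟩
  · rfl
  · simp [hr] at hz

theorem not_anc_of_parent_eq (h : T.parent x = some y) : ¬ T.Anc x y := by
  intro hyx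
  -- `x` would lie on a cycle of the parent map, which every ancestor of `x` leads back to;
  -- in particular the root would be `x`.
  have back : ∀ z, ReflTransGen (fun a b => T.parent a = some b) x z → T.Anc x z := by
    intro z hz
    induction hz with
    | refl => exact T.anc_refl x
    | @tail b c _ hbc ih =>
      rcases ReflTransGen.cases_head ih with hbx | ⟨w, hbw, hwx⟩
      · subst hbx
        exact parent_rightUnique h hbc ▸ hyx
      · exact parent_rightUnique hbw hbc ▸ hwx
  obtain ⟨r, -, hr, hxr⟩ := T.reaches_root x (T.mem_of_parent h).1
  rw [← eq_of_anc_of_parent_eq_none hr (back r hxr), h] at hr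
  exact Option.some_ne_none y hr

theorem parent_ne_self (T : RTree V) (x : V) : T.parent x ≠ some x :=
  fun h => not_anc_of_parent_eq h (T.anc_refl x)

theorem anc_antisymm (h₁ : T.Anc a b) (h₂ : T.Anc b a) : a = b := by
  rcases ReflTransGen.cases_head h₁ with rfl | ⟨z, hz, hza⟩
  · rfl
  · exact absurd (h₂.trans hza) (not_anc_of_parent_eq hz)

theorem anc_total (ha : T.Anc a v) (hb : T.Anc b v) : T.Anc a b ∨ T.Anc b a :=
  (ReflTransGen.total_of_right_unique parent_rightUnique ha hb).symm

theorem eq_of_parent_eq_of_anc {u : V} (hx : T.parent x = some u) (hy : T.parent y = some u)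
    (h : T.Anc x y) : x = y := by
  rcases (anc_iff_of_parent_eq hy).1 h with rfl | hxu
  · rfl
  · exact absurd hxu (not_anc_of_parent_eq hx)

theorem exists_parent_eq_of_anc_of_ne (h : T.Anc a v) (hne : v ≠ a) :
    ∃ q, T.parent q = some a ∧ T.Anc q v := by
  rcases ReflTransGen.cases_tail h with rfl | ⟨q, hq, hqa⟩
  exacts [absurd rfl hne, ⟨q, hqa, hq⟩]

theorem anc_of_parent_eq_none (hr : T.parent r = none) (hrT : r ∈ T.supp) (hv : v ∈ T.supp) :
    T.Anc r v := by
  obtain ⟨r', hr'T, hr', hvr'⟩ := T.reaches_root v hv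
  exact T.root_unique r hrT r' hr'T hr hr' ▸ hvr'

theorem exists_parent_eq_of_anc (P : V → Prop) (h : T.Anc a v) (ha : P a) (hv : ¬ P v) :
    ∃ x y, T.Anc x v ∧ T.parent x = some y ∧ ¬ P x ∧ P y := by
  induction h using ReflTransGen.head_induction_on with
  | refl => exact absurd ha hv
  | @head v w hvw _ ih =>
    by_cases hw : P w
    · exact ⟨v, w, T.anc_refl v, hvw, hv, hw⟩
    · obtain ⟨x, y, hxw, hxy⟩ := ih hw
      exact ⟨x, y, hxw.trans (anc_of_parent_eq hvw), hxy⟩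

theorem ext {T₁ T₂ : RTree V} (hs : T₁.supp = T₂.supp) (hp : T₁.parent = T₂.parent) :
    T₁ = T₂ := by
  cases T₁; cases T₂; simp_all

theorem exists_supp_eq_univ [Fintype V] (f : V → Option V) (hr : f r = none)
    (hreach : ∀ v, ReflTransGen (fun a b => f a = some b) v r) :
    ∃ T : RTree V, T.supp = Finset.univ ∧ T.parent = f := by
  have root_eq : ∀ v, f v = none → v = r := fun v hv => by
    rcases ReflTransGen.cases_head (hreach v) with h | ⟨z, hz, -⟩
    exacts [h, by simp [hv] at hz]
  exact ⟨⟨Finset.univ, f, fun v hv => absurd (Finset.mem_univ v) hv,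
    fun _ => ⟨Finset.mem_univ _, Finset.mem_univ _⟩,
    fun v _ w _ hv hw => (root_eq v hv).trans (root_eq w hw).symm,
    fun v _ => ⟨r, Finset.mem_univ r, hr, hreach v⟩⟩, rfl, rfl⟩

end RTree

namespace ReachesIn

variable {V : Type} {G : SimpleGraph V}

theorem trans {k₁ k₂ : ℕ} {T₁ T₂ T₃ : RTree V} (h₁ : ReachesIn G k₁ T₁ T₂)
    (h₂ : ReachesIn G k₂ T₂ T₃) : ReachesIn G (k₁ + k₂) T₁ T₃ := by
  induction k₁ generalizing T₁ with
  | zero => rw [Nat.zero_add, show T₁ = T₂ from h₁]; exact h₂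
  | succ k ih =>
    obtain ⟨T', hrot, hrest⟩ := h₁
    rw [Nat.add_right_comm]
    exact ⟨T', hrot, ih hrest⟩

theorem single {T₁ T₂ : RTree V} (h : IsRotation G T₁ T₂) : ReachesIn G 1 T₁ T₂ := ⟨T₂, h, rfl⟩

end ReachesIn

theorem SimpleGraph.Reachable.induce_rec {V : Type} {H : SimpleGraph V} {D : Set V}
    (Q : V → Prop) (hQ : ∀ x ∈ D, ∀ y ∈ D, H.Adj x y → Q x → Q y) {x y : D}
    (h : (H.induce D).Reachable x y) (hx : Q x) : Q y := by
  rw [SimpleGraph.reachable_iff_reflTransGen] at h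
  induction h with
  | refl => exact hx
  | @tail b c _ hbc ih => exact hQ _ b.2 _ c.2 hbc ih

theorem SimpleGraph.Connected.exists_adj_of_ne {V : Type} {H : SimpleGraph V} {D : Set V}
    (hD : (H.induce D).Connected) {x y : V} (hx : x ∈ D) (hy : y ∈ D) (hne : x ≠ y) :
    ∃ z ∈ D, H.Adj x z := by
  have h := (SimpleGraph.reachable_iff_reflTransGen _ _).1 (hD.preconnected ⟨x, hx⟩ ⟨y, hy⟩)
  rcases ReflTransGen.cases_head h with h | ⟨z, hz, -⟩
  · exact absurd (congrArg Subtype.val h) hne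
  · exact ⟨z, z.2, hz⟩

section Caterpillar

variable {n : ℕ} {m : Fin n → ℕ}

def spineIdx : CatV n m → Fin n
  | inl i => i
  | inr l => l.1

theorem caterpillar_adj_inl_iff {u : CatV n m} {w : Fin n} :
    (caterpillar n m).Adj u (inl w) ↔
      (∃ k, u = inl k ∧ (k.val + 1 = w.val ∨ w.val + 1 = k.val)) ∨ ∃ l, u = inr l ∧ l.1 = w := by
  cases u <;> simp [caterpillar]

theorem caterpillar_adj_inr_iff {u : CatV n m} {l : Σ i : Fin n, Fin (m i)} :
    (caterpillar n m).Adj (inr l) u ↔ u = inl l.1 := by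
  cases u <;> simp [caterpillar, eq_comm]

theorem spineIdx_le_of_adj {x y : CatV n m} {k : Fin n} (h : (caterpillar n m).Adj x y)
    (hx : spineIdx x ≤ k) (hxk : x ≠ inl k) (hyk : y ≠ inl k) : spineIdx y ≤ k := by
  rcases x with i | l <;> rcases y with j | l'
  · have hik : i ≠ k := fun h => hxk (h ▸ rfl)
    have hjk : j ≠ k := fun h => hyk (h ▸ rfl)
    simp only [spineIdx, caterpillar] at h hx ⊢
    omega
  · simp only [spineIdx, caterpillar] at h hx ⊢
    exact h ▸ hx
  · simp only [spineIdx, caterpillar] at h hx ⊢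
    exact h ▸ hx
  · exact absurd h id

namespace noFreeLegs

variable {T : RTree (CatV n m)}

theorem eq_of_anc_inr (hT : noFreeLegs T) {l : Σ i : Fin n, Fin (m i)} {v : CatV n m}
    (h : T.Anc (inr l) v) : v = inr l := by
  rcases ReflTransGen.cases_tail h with rfl | ⟨b, -, hb⟩
  exacts [rfl, absurd hb (hT b l)]

theorem exists_eq_inl_of_anc (hT : noFreeLegs T) {x : CatV n m} {i : Fin n}
    (h : T.Anc x (inl i)) : ∃ j, x = inl j := by
  cases x with
  | inl j => exact ⟨j, rfl⟩
  | inr l => exact absurd (hT.eq_of_anc_inr h) inl_ne_inr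

end noFreeLegs

def SpineAnc (T : RTree (CatV n m)) (a k : Fin n) : Prop := T.Anc (inl a) (inl k)

structure IsBoundLegTree (T : RTree (CatV n m)) : Prop where
  supp_eq : T.supp = Finset.univ
  noFreeLegs : noFreeLegs T
  parent_inr : ∀ l, T.parent (inr l) = some (inl l.1)
  spineAnc_or_spineAnc : ∀ i j : Fin n, i.val + 1 = j.val → SpineAnc T i j ∨ SpineAnc T j i
  ordConnected : ∀ a, {k | SpineAnc T a k}.OrdConnected

namespace SpineAnc

variable {T : RTree (CatV n m)} {a b k : Fin n}

theorem refl (T : RTree (CatV n m)) (a : Fin n) : SpineAnc T a a := T.anc_refl _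

theorem trans (h₁ : SpineAnc T a b) (h₂ : SpineAnc T b k) : SpineAnc T a k :=
  RTree.Anc.trans h₁ h₂

theorem of_parent_eq (h : T.parent (inl k) = some (inl a)) : SpineAnc T a k :=
  RTree.anc_of_parent_eq h

theorem antisymm (h₁ : SpineAnc T a b) (h₂ : SpineAnc T b a) : a = b :=
  inl_injective (RTree.anc_antisymm h₁ h₂)

end SpineAnc

namespace IsBoundLegTree

variable {T : RTree (CatV n m)} (hT : IsBoundLegTree T) {a b k u y : Fin n}
include hT

theorem exists_parent_eq_spineAnc (h : SpineAnc T u k) (hne : k ≠ u) :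
    ∃ q, T.parent (inl q) = some (inl u) ∧ SpineAnc T q k := by
  obtain ⟨x, hx, hxk⟩ := RTree.exists_parent_eq_of_anc_of_ne h (inl_injective.ne hne)
  obtain ⟨q, rfl⟩ := hT.noFreeLegs.exists_eq_inl_of_anc hxk
  exact ⟨q, hx, hxk⟩

theorem eq_of_mem_uIcc {j : Fin n} (hak : SpineAnc T a k) (hkj : SpineAnc T k j)
    (ha : a ∈ Set.uIcc k j) : a = k :=
  hak.antisymm ((hT.ordConnected k).uIcc_subset (SpineAnc.refl T k) hkj ha)

theorem lt_iff_lt_of_parent_eq (hyu : T.parent (inl y) = some (inl u)) (hyk : SpineAnc T y k) :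
    k < u ↔ y < u := by
  have hu : u ∉ Set.uIcc y k := fun hu =>
    T.parent_ne_self _ (hT.eq_of_mem_uIcc (.of_parent_eq hyu) hyk hu ▸ hyu)
  have hku : k ≠ u := by
    rintro rfl
    exact RTree.not_anc_of_parent_eq hyu hyk
  simp only [Set.mem_uIcc, not_or, not_and_or, not_le] at hu
  omega

theorem spineAnc_of_adj (hyu : T.parent (inl y) = some (inl u)) (hyb : SpineAnc T y b)
    (hbk : b.val + 1 = k.val ∨ k.val + 1 = b.val) (hk : k ∈ Set.uIcc y u) (hku : k ≠ u) :
    SpineAnc T y k := by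
  -- otherwise `k` would be a strict ancestor of `y`, hence of `u`, lying between `y` and `u`
  by_contra hyk
  have hky : SpineAnc T k y := by
    have hkb : SpineAnc T k b := by
      rcases hbk with h | h
      · exact (hT.spineAnc_or_spineAnc b k h).resolve_left fun h' => hyk (hyb.trans h')
      · exact (hT.spineAnc_or_spineAnc k b h).resolve_right fun h' => hyk (hyb.trans h')
    exact (RTree.anc_total hkb hyb).resolve_right hyk
  have hky' : k ≠ y := by
    rintro rfl
    exact hyk (.refl T k)
  have hku' : SpineAnc T k u :=
    ((RTree.anc_iff_of_parent_eq hyu).1 hky).resolve_left (inl_injective.ne hky')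
  exact hku (hT.eq_of_mem_uIcc hku' (.of_parent_eq hyu) (Set.uIcc_comm y u ▸ hk))

theorem spineAnc_of_le_of_lt (hyu : T.parent (inl y) = some (inl u)) (hyk : y ≤ k)
    (hku : k < u) : SpineAnc T y k := by
  obtain ⟨d, hd⟩ := Nat.exists_eq_add_of_le (Fin.le_def.1 hyk)
  induction d generalizing k with
  | zero => exact Fin.ext hd ▸ .refl T y
  | succ d ih =>
    have hb := ih (k := ⟨k.val - 1, by omega⟩) (Fin.le_def.2 (by dsimp only; omega))
      (Fin.lt_def.2 (by dsimp only; omega)) (by dsimp only; omega)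
    exact hT.spineAnc_of_adj hyu hb (.inl (by dsimp only; omega))
      (Set.mem_uIcc.2 (.inl ⟨hyk, hku.le⟩)) hku.ne

theorem spineAnc_of_lt_of_le (hyu : T.parent (inl y) = some (inl u)) (huk : u < k)
    (hky : k ≤ y) : SpineAnc T y k := by
  obtain ⟨d, hd⟩ := Nat.exists_eq_add_of_le (Fin.le_def.1 hky)
  induction d generalizing k with
  | zero => exact Fin.ext hd.symm ▸ .refl T y
  | succ d ih =>
    have hb := ih (k := ⟨k.val + 1, by omega⟩) (Fin.lt_def.2 (by dsimp only; omega))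
      (Fin.le_def.2 (by dsimp only; omega)) (by dsimp only; omega)
    exact hT.spineAnc_of_adj hyu hb (.inr rfl)
      (Set.mem_uIcc.2 (.inr ⟨huk.le, hky⟩)) huk.ne'

theorem eq_of_parent_eq {y₁ y₂ : Fin n} (h₁ : T.parent (inl y₁) = some (inl u))
    (h₂ : T.parent (inl y₂) = some (inl u)) (hside : y₁ < u ↔ y₂ < u) : y₁ = y₂ := by
  have hne : ∀ {y}, T.parent (inl y) = some (inl u) → y ≠ u := by
    rintro y hy rfl
    exact T.parent_ne_self _ hy
  have key : ∀ {y y'}, T.parent (inl y) = some (inl u) → T.parent (inl y') = some (inl u) →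
      (y < u ↔ y' < u) → y ≤ y' → y = y' := by
    intro y y' hy hy' hside hle
    rcases lt_or_gt_of_ne (hne hy') with h | h
    · exact inl_injective (RTree.eq_of_parent_eq_of_anc hy hy'
        (hT.spineAnc_of_le_of_lt hy hle h))
    · have huy : u < y := lt_of_le_of_ne (not_lt.1 (mt hside.1 (not_lt.2 h.le))) (hne hy).symm
      exact (inl_injective (RTree.eq_of_parent_eq_of_anc hy' hy
        (hT.spineAnc_of_lt_of_le hy' huy hle))).symm
  rcases le_total y₁ y₂ with h | h
  exacts [key h₁ h₂ hside h, (key h₂ h₁ hside.symm h).symm]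

theorem spineAnc_of_lt_of_parent_eq (hyu : T.parent (inl y) = some (inl u)) (hyu' : y < u)
    (huk : SpineAnc T u k) (hku : k < u) : SpineAnc T y k := by
  obtain ⟨q, hq, hqk⟩ := hT.exists_parent_eq_spineAnc huk hku.ne
  rwa [hT.eq_of_parent_eq hyu hq (iff_of_true hyu' ((hT.lt_iff_lt_of_parent_eq hq hqk).1 hku))]

theorem exists_adj_of_mem_descSet {u : CatV n m} {w : Fin n} (hu : u ∈ T.descSet (inl y))
    (hadj : (caterpillar n m).Adj u (inl w)) :
    SpineAnc T y w ∨ ∃ k, SpineAnc T y k ∧ (k.val + 1 = w.val ∨ w.val + 1 = k.val) := by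
  rcases caterpillar_adj_inl_iff.1 hadj with ⟨k, rfl, hk⟩ | ⟨l, rfl, rfl⟩
  · exact .inr ⟨k, hu, hk⟩
  · exact .inl (((RTree.anc_iff_of_parent_eq (hT.parent_inr l)).1 hu).resolve_left inl_ne_inr)

end IsBoundLegTree

theorem isBoundLegTree_of_isSTG {T : RTree (CatV n m)} (hST : IsSTG (caterpillar n m) T)
    (hT : noFreeLegs T) : IsBoundLegTree T := by
  obtain ⟨hsupp, hconn, hcomp⟩ := hST
  have hcomp' := fun u v (h : (caterpillar n m).Adj u v) =>
    hcomp u v (Finset.mem_univ u) (Finset.mem_univ v) h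
  refine ⟨hsupp, hT, fun l => ?_, fun i j h => hcomp' _ _ (.inl h), fun a => ⟨?_⟩⟩
  · have hl : T.Anc (inl l.1) (inr l) :=
      (hcomp' (inl l.1) (inr l) rfl).resolve_right fun h => inl_ne_inr (hT.eq_of_anc_inr h)
    obtain ⟨e, he, hle⟩ := ReflTransGen.cases_head hl |>.resolve_left inr_ne_inl
    obtain ⟨z, hz, hadj⟩ := (hconn e (Finset.mem_univ e)).exists_adj_of_ne
      (RTree.anc_of_parent_eq he) (T.anc_refl e) fun h => T.parent_ne_self _ (h ▸ he)
    rw [caterpillar_adj_inr_iff.1 hadj.1] at hz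
    rwa [← RTree.anc_antisymm hle hz] at he
  · intro i hi j hj k ⟨hik, hkj⟩
    by_contra hk
    replace hk : inl k ∉ T.descSet (inl a) := hk
    have hQ : ∀ x ∈ T.descSet (inl a), ∀ y ∈ T.descSet (inl a),
        (restrictG (caterpillar n m) ↑(Finset.univ : Finset (CatV n m))).Adj x y →
          spineIdx x ≤ k → spineIdx y ≤ k :=
      fun x hx y hy hxy hxk =>
        spineIdx_le_of_adj hxy.1 hxk (fun h => hk (h ▸ hx)) (fun h => hk (h ▸ hy))
    have hjk : j ≤ k := ((hconn (inl a) (Finset.mem_univ _)).preconnected ⟨inl i, hi⟩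
      ⟨inl j, hj⟩).induce_rec (fun x => spineIdx x ≤ k) hQ hik
    exact hk (le_antisymm hkj hjk ▸ hj)

/-- The parent map after rotating the edge from `c` up to its parent `p`, when `c < p`.
Within the subtree of `c` the only neighbour of `p` is `p - 1`, which lies in the subtree of
the child of `c` above `c`; so exactly that child moves from `c` to `p`. -/
def rotParent (T : RTree (CatV n m)) (c p : Fin n) (v : CatV n m) : Option (CatV n m) :=
  if v = inl c then T.parent (inl p)
  else if v = inl p then some (inl c)
  else if T.parent v = some (inl c) ∧ c < spineIdx v then some (inl p)
  else T.parent v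

section Rotation

variable {T T' : RTree (CatV n m)} {c p : Fin n} {u v : CatV n m}

theorem rotParent_cases (hne : c ≠ p) (v : CatV n m) :
    (v = inl c ∧ rotParent T c p v = T.parent (inl p)) ∨
    (v = inl p ∧ rotParent T c p v = some (inl c)) ∨
    (v ≠ inl p ∧ (T.parent v = some (inl c) ∧ c < spineIdx v) ∧
      rotParent T c p v = some (inl p)) ∨
    (v ≠ inl c ∧ v ≠ inl p ∧ ¬ (T.parent v = some (inl c) ∧ c < spineIdx v) ∧
      rotParent T c p v = T.parent v) := by
  unfold rotParent
  by_cases hc : v = inl c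
  · simp [hc]
  by_cases hp : v = inl p
  · simp [hp, hne.symm]
  by_cases hm : T.parent v = some (inl c) ∧ c < spineIdx v <;> simp [hc, hp, hm]

theorem rotParent_inl_c : rotParent T c p (inl c) = T.parent (inl p) := if_pos rfl

theorem rotParent_inl_p (hne : c ≠ p) : rotParent T c p (inl p) = some (inl c) := by
  simp [rotParent, hne.symm]

theorem rotParent_of_moved (hvp : v ≠ inl p) (hv : T.parent v = some (inl c) ∧ c < spineIdx v) :
    rotParent T c p v = some (inl p) := by
  have hvc : v ≠ inl c := by
    rintro rfl
    exact hv.2.ne rfl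
  simp [rotParent, hvc, hvp, hv]

theorem rotParent_of_not_moved (hvc : v ≠ inl c) (hvp : v ≠ inl p)
    (hv : ¬ (T.parent v = some (inl c) ∧ c < spineIdx v)) : rotParent T c p v = T.parent v := by
  simp only [rotParent, if_neg hvc, if_neg hvp, if_neg hv]

theorem rotParent_of_not_anc (hcp : T.parent (inl c) = some (inl p)) (hlt : c < p)
    (hv : ¬ T.Anc (inl p) v) : rotParent T c p v = T.parent v := by
  rcases rotParent_cases (T := T) hlt.ne v with
    ⟨rfl, -⟩ | ⟨rfl, -⟩ | ⟨-, ⟨hvc, -⟩, -⟩ | ⟨-, -, -, h⟩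
  · exact absurd (RTree.anc_of_parent_eq hcp) hv
  · exact absurd (T.anc_refl _) hv
  · exact absurd ((RTree.anc_of_parent_eq hcp).trans (RTree.anc_of_parent_eq hvc)) hv
  · exact h

theorem reflTransGen_rotParent_of_anc (hlt : c < p) (hv : T.Anc (inl p) v) :
    ReflTransGen (fun x y => rotParent T c p x = some y) v (inl c) := by
  have hpc : rotParent T c p (inl p) = some (inl c) := rotParent_inl_p hlt.ne
  induction hv using ReflTransGen.head_induction_on with
  | refl => exact .single hpc
  | @head v w hvw _ ih =>
    rcases rotParent_cases (T := T) hlt.ne v with ⟨rfl, -⟩ | ⟨rfl, -⟩ | ⟨-, -, h⟩ | ⟨-, -, -, h⟩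
    · rfl
    · exact .single hpc
    · exact .head h (.single hpc)
    · exact .head (h.trans hvw) ih

theorem rot_parent_inl_p (hlt : c < p) (hT' : T'.parent = rotParent T c p) :
    T'.parent (inl p) = some (inl c) := by
  rw [hT', rotParent_inl_p hlt.ne]

theorem rot_anc_inl_c_iff (hcp : T.parent (inl c) = some (inl p)) (hlt : c < p)
    (hT' : T'.parent = rotParent T c p) : T'.Anc (inl c) v ↔ T.Anc (inl p) v := by
  refine ⟨fun h => ?_, fun h => by rw [RTree.Anc, hT']; exact reflTransGen_rotParent_of_anc hlt h⟩
  induction h using ReflTransGen.head_induction_on with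
  | refl => exact RTree.anc_of_parent_eq hcp
  | @head v w hvw _ ih =>
    rw [hT'] at hvw
    rcases rotParent_cases (T := T) hlt.ne v with
      ⟨rfl, -⟩ | ⟨rfl, -⟩ | ⟨-, ⟨hvc, -⟩, -⟩ | ⟨-, -, -, h⟩
    · exact RTree.anc_of_parent_eq hcp
    · exact T.anc_refl _
    · exact (RTree.anc_of_parent_eq hcp).trans (RTree.anc_of_parent_eq hvc)
    · exact ih.trans (RTree.anc_of_parent_eq (h ▸ hvw))

theorem rot_anc_iff_of_ne (hcp : T.parent (inl c) = some (inl p)) (hlt : c < p)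
    (hT' : T'.parent = rotParent T c p) (huc : u ≠ inl c) (hup : u ≠ inl p) :
    T'.Anc u v ↔ T.Anc u v := by
  have hp' := rot_parent_inl_p hlt hT'
  constructor
  · intro h
    induction h using ReflTransGen.head_induction_on with
    | refl => exact T.anc_refl u
    | @head v w hvw _ ih =>
      rw [hT'] at hvw
      rcases rotParent_cases (T := T) hlt.ne v with
        ⟨rfl, h⟩ | ⟨rfl, h⟩ | ⟨-, ⟨hvc, -⟩, h⟩ | ⟨-, -, -, h⟩
      · exact (ih.trans (RTree.anc_of_parent_eq (h ▸ hvw))).trans (RTree.anc_of_parent_eq hcp)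
      · obtain rfl := Option.some_injective _ (hvw.symm.trans h)
        exact ((RTree.anc_iff_of_parent_eq hcp).1 ih).resolve_left huc
      · obtain rfl := Option.some_injective _ (hvw.symm.trans h)
        exact (ih.trans (RTree.anc_of_parent_eq hcp)).trans (RTree.anc_of_parent_eq hvc)
      · exact ih.trans (RTree.anc_of_parent_eq (h ▸ hvw))
  · intro h
    induction h using ReflTransGen.head_induction_on with
    | refl => exact T'.anc_refl u
    | @head v w hvw _ ih =>
      rcases rotParent_cases (T := T) hlt.ne v with
        ⟨rfl, h⟩ | ⟨rfl, h⟩ | ⟨-, ⟨hvc, -⟩, h⟩ | ⟨-, -, -, h⟩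
      · obtain rfl := Option.some_injective _ (hvw.symm.trans hcp)
        exact ((RTree.anc_iff_of_parent_eq hp').1 ih).resolve_left hup
      · have hc' : T'.parent (inl c) = some w := by rw [hT', rotParent_inl_c, hvw]
        exact (ih.trans (RTree.anc_of_parent_eq hc')).trans (RTree.anc_of_parent_eq hp')
      · obtain rfl := Option.some_injective _ (hvw.symm.trans hvc)
        exact (ih.trans (RTree.anc_of_parent_eq hp')).trans (RTree.anc_of_parent_eq (hT' ▸ h))
      · exact ih.trans (RTree.anc_of_parent_eq (by rw [hT', h, hvw]))

namespace IsBoundLegTree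

theorem exists_rotParent (hT : IsBoundLegTree T) (hcp : T.parent (inl c) = some (inl p))
    (hlt : c < p) :
    ∃ T' : RTree (CatV n m), T'.supp = Finset.univ ∧ T'.parent = rotParent T c p := by
  have hmem : ∀ v, v ∈ T.supp := fun v => hT.supp_eq ▸ Finset.mem_univ v
  have hrot_c : rotParent T c p (inl c) = T.parent (inl p) := if_pos rfl
  have outside : ∀ {v w}, ¬ T.Anc (inl p) v → ReflTransGen (fun x y => T.parent x = some y) v w →
      ReflTransGen (fun x y => rotParent T c p x = some y) v w :=
    reflTransGen_of_eqOn (S := {v | ¬ T.Anc (inl p) v})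
      (fun _ hv _ hvw hw => hv (hw.trans (RTree.anc_of_parent_eq hvw)))
      (fun _ hv => (rotParent_of_not_anc hcp hlt hv).symm)
  cases hpg : T.parent (inl p) with
  | none =>
    exact RTree.exists_supp_eq_univ _ (hrot_c.trans hpg) fun v =>
      reflTransGen_rotParent_of_anc hlt (RTree.anc_of_parent_eq_none hpg (hmem _) (hmem v))
  | some g =>
    obtain ⟨r, -, hr, hgr⟩ := T.reaches_root g (hmem g)
    have hpr : ¬ T.Anc (inl p) r := fun h => by
      obtain rfl := RTree.eq_of_anc_of_parent_eq_none hr h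
      simp [hpg] at hr
    refine RTree.exists_supp_eq_univ _ ((rotParent_of_not_anc hcp hlt hpr).trans hr) fun v => ?_
    by_cases hv : T.Anc (inl p) v
    · exact (reflTransGen_rotParent_of_anc hlt hv).trans
        (.head (hrot_c.trans hpg) (outside (RTree.not_anc_of_parent_eq hpg) hgr))
    · exact outside hv (RTree.anc_of_parent_eq_none hr (hmem r) (hmem v))

variable {a k : Fin n} {x : CatV n m}

theorem exists_adj_inl_p_iff (hT : IsBoundLegTree T) (hcp : T.parent (inl c) = some (inl p))
    (hlt : c < p) (hxc : T.parent x = some (inl c)) :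
    (∃ u ∈ T.descSet x, (caterpillar n m).Adj u (inl p)) ↔ c < spineIdx x := by
  rcases x with q | l
  · have hcq : SpineAnc T c q := .of_parent_eq hxc
    have hqp : q < p := (hT.lt_iff_lt_of_parent_eq hcp hcq).2 hlt
    constructor
    · rintro ⟨u, hu, hadj⟩
      rcases hT.exists_adj_of_mem_descSet hu hadj with hq | ⟨k, hqk, hk⟩
      · exact absurd (SpineAnc.antisymm hq ((SpineAnc.of_parent_eq hcp).trans hcq)) hqp.ne
      · have hkp : k < p := (hT.lt_iff_lt_of_parent_eq hcp (hcq.trans hqk)).2 hlt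
        have hkc : k ≠ c := by
          rintro rfl
          exact RTree.not_anc_of_parent_eq hxc hqk
        have hqc : q ≠ c := by
          rintro rfl
          exact T.parent_ne_self _ hxc
        have := (hT.lt_iff_lt_of_parent_eq hxc hqk).not
        simp only [spineIdx]
        omega
    · intro hcq'
      simp only [spineIdx] at hcq'
      obtain ⟨k, hk⟩ : ∃ k : Fin n, k.val + 1 = p.val := ⟨⟨p.val - 1, by omega⟩, by simp; omega⟩
      have hck : SpineAnc T c k := hT.spineAnc_of_le_of_lt hcp (by omega) (by omega)
      obtain ⟨q', hq', hq'k⟩ := hT.exists_parent_eq_spineAnc hck (by omega)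
      have hside := (hT.lt_iff_lt_of_parent_eq hq' hq'k).not
      have hq'q : q' = q := hT.eq_of_parent_eq hq' hxc
        (iff_of_false (fun h => hside.1 (by omega) h) (not_lt.2 hcq'.le))
      exact ⟨inl k, hq'q ▸ hq'k, .inl hk⟩
  · have hl : l.1 = c := by simpa [hT.parent_inr l] using hxc
    simp only [spineIdx, hl, lt_irrefl, iff_false, not_exists, not_and]
    intro u hu hadj
    rw [hT.noFreeLegs.eq_of_anc_inr hu, caterpillar_adj_inr_iff] at hadj
    exact hlt.ne (by simpa [hl] using hadj.symm)

section Rotated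

variable (hT : IsBoundLegTree T) (hcp : T.parent (inl c) = some (inl p)) (hlt : c < p)
  (hT' : T'.parent = rotParent T c p) (hsupp : T'.supp = Finset.univ)

include hT hcp hlt hT'

theorem rot_spineAnc_inl_p_iff : SpineAnc T' p k ↔ SpineAnc T p k ∧ c < k := by
  have hp' := rot_parent_inl_p hlt hT'
  have hcp' : SpineAnc T' c p := .of_parent_eq hp'
  constructor
  · intro h
    have hpk : SpineAnc T p k := (rot_anc_inl_c_iff hcp hlt hT').1 (hcp'.trans h)
    refine ⟨hpk, lt_of_not_ge fun hkc => ?_⟩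
    rcases hkc.eq_or_lt with rfl | hkc
    · exact hlt.ne (hcp'.antisymm h)
    obtain ⟨b, hbc, hbk⟩ := hT.exists_parent_eq_spineAnc
      (hT.spineAnc_of_lt_of_parent_eq hcp hlt hpk (hkc.trans hlt)) hkc.ne
    have hb : b < c := (hT.lt_iff_lt_of_parent_eq hbc hbk).1 hkc
    have hbc' : inl b ≠ (inl c : CatV n m) := inl_injective.ne hb.ne
    have hbp' : inl b ≠ (inl p : CatV n m) := inl_injective.ne (hb.trans hlt).ne
    rcases RTree.anc_total h ((rot_anc_iff_of_ne hcp hlt hT' hbc' hbp').2 hbk) with hpb | hbp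
    · have hb' : T'.parent (inl b) = some (inl c) := by
        rw [hT', rotParent_of_not_moved hbc' hbp' fun h => (not_lt.2 hb.le) h.2, hbc]
      have hpc := ((RTree.anc_iff_of_parent_eq hb').1 hpb).resolve_left hbp'.symm
      exact hlt.ne (hcp'.antisymm hpc)
    · exact (hb.trans hlt).ne (SpineAnc.antisymm ((rot_anc_iff_of_ne hcp hlt hT' hbc' hbp').1 hbp)
        ((SpineAnc.of_parent_eq hcp).trans (.of_parent_eq hbc)))
  · rintro ⟨hpk, hck⟩
    obtain ⟨q, hq, hqk⟩ := RTree.exists_parent_eq_of_anc_of_ne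
      ((rot_anc_inl_c_iff hcp hlt hT').2 hpk) (inl_injective.ne hck.ne')
    rw [hT'] at hq
    rcases rotParent_cases (T := T) hlt.ne q with
      ⟨rfl, -⟩ | ⟨rfl, -⟩ | ⟨-, -, h⟩ | ⟨hqc, hqp, hqm, h⟩
    · exact absurd (hT' ▸ hq) (T'.parent_ne_self _)
    · exact hqk
    · exact absurd (inl_injective (Option.some_injective _ (hq.symm.trans h))) hlt.ne
    · have hqk' := (rot_anc_iff_of_ne hcp hlt hT' hqc hqp).1 hqk
      obtain ⟨b, rfl⟩ := hT.noFreeLegs.exists_eq_inl_of_anc hqk'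
      have hbc : T.parent (inl b) = some (inl c) := h ▸ hq
      have hb : b < c := lt_of_le_of_ne (not_lt.1 fun h => hqm ⟨hbc, h⟩) (by simpa using hqc)
      exact absurd ((hT.lt_iff_lt_of_parent_eq hbc hqk').2 hb) (not_lt.2 hck.le)

theorem rot_spineAnc_of_spineAnc (h : SpineAnc T a k) : SpineAnc T' a k ∨ (a = p ∧ k ≤ c) := by
  by_cases hac : a = c
  · subst hac
    exact .inl ((rot_anc_inl_c_iff hcp hlt hT').2 ((SpineAnc.of_parent_eq hcp).trans h))
  by_cases hap : a = p
  · subst hap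
    by_cases hck : c < k
    · exact .inl ((hT.rot_spineAnc_inl_p_iff hcp hlt hT').2 ⟨h, hck⟩)
    · exact .inr ⟨rfl, not_lt.1 hck⟩
  · exact .inl ((rot_anc_iff_of_ne hcp hlt hT' (inl_injective.ne hac) (inl_injective.ne hap)).2 h)

theorem exists_le_spineAnc_of_rot (h : SpineAnc T' a k) : ∃ b, a ≤ b ∧ SpineAnc T b k := by
  by_cases hac : a = c
  · subst hac
    exact ⟨p, hlt.le, (rot_anc_inl_c_iff hcp hlt hT').1 h⟩
  by_cases hap : a = p
  · subst hap
    exact ⟨a, le_rfl, ((hT.rot_spineAnc_inl_p_iff hcp hlt hT').1 h).1⟩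
  · exact ⟨a, le_rfl,
      (rot_anc_iff_of_ne hcp hlt hT' (inl_injective.ne hac) (inl_injective.ne hap)).1 h⟩

theorem rot_not_exists_adj_inl_c (hxp : T.parent x = some (inl p)) (hxc : x ≠ inl c) :
    ¬ ∃ u ∈ T'.descSet x, (caterpillar n m).Adj u (inl c) := by
  rintro ⟨u, hu, hadj⟩
  have hxp' : x ≠ inl p := fun h => T.parent_ne_self _ (h ▸ hxp)
  have hu' : T.Anc x u := (rot_anc_iff_of_ne hcp hlt hT' hxc hxp').1 hu
  rcases x with q | l
  · have hqc : q ≠ c := by simpa using hxc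
    have hpq : p < q := by
      rcases lt_or_gt_of_ne (show q ≠ p by simpa using hxp') with h | h
      · exact absurd (hT.eq_of_parent_eq hxp hcp (iff_of_true h hlt)) hqc
      · exact h
    rcases hT.exists_adj_of_mem_descSet hu' hadj with hqc' | ⟨k, hqk, hk⟩
    · exact absurd ((hT.lt_iff_lt_of_parent_eq hxp hqc').1 hlt) (not_lt.2 hpq.le)
    · have hside := (hT.lt_iff_lt_of_parent_eq hxp hqk).not
      have hkp : k ≠ p := by
        rintro rfl
        exact RTree.not_anc_of_parent_eq hxp hqk
      omega
  · rw [hT.noFreeLegs.eq_of_anc_inr hu', caterpillar_adj_inr_iff] at hadj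
    have hl : l.1 = p := by simpa [hT.parent_inr l] using hxp
    exact hlt.ne (by simpa [hl] using hadj)

include hsupp

theorem rot : IsBoundLegTree T' := by
  have hp' := rot_parent_inl_p hlt hT'
  refine ⟨hsupp, fun x l => ?_, fun l => ?_, fun i j hij => ?_, fun a => ?_⟩
  · rw [hT']
    rcases rotParent_cases (T := T) hlt.ne x with ⟨-, h⟩ | ⟨-, h⟩ | ⟨-, -, h⟩ | ⟨-, -, -, h⟩ <;>
      rw [h]
    exacts [hT.noFreeLegs _ l, by simp, by simp, hT.noFreeLegs x l]
  · rw [hT', rotParent_of_not_moved (by simp) (by simp), hT.parent_inr l]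
    rintro ⟨h, hlt'⟩
    rw [hT.parent_inr l] at h
    simp only [Option.some.injEq, inl.injEq] at h
    exact hlt'.ne h.symm
  · rcases hT.spineAnc_or_spineAnc i j hij with h | h
    · rcases hT.rot_spineAnc_of_spineAnc hcp hlt hT' h with h | ⟨rfl, hjc⟩
      exacts [.inl h, absurd hlt (by omega)]
    · rcases hT.rot_spineAnc_of_spineAnc hcp hlt hT' h with h | ⟨rfl, hic⟩
      · exact .inr h
      · obtain rfl : i = c := Fin.ext (by omega)
        exact .inl (.of_parent_eq hp')
  · by_cases hac : a = c
    · subst hac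
      have : {k | SpineAnc T' a k} = {k | SpineAnc T p k} :=
        Set.ext fun k => rot_anc_inl_c_iff hcp hlt hT'
      exact this ▸ hT.ordConnected p
    by_cases hap : a = p
    · subst hap
      have : {k | SpineAnc T' a k} = {k | SpineAnc T a k} ∩ Set.Ioi c :=
        Set.ext fun k => hT.rot_spineAnc_inl_p_iff hcp hlt hT'
      exact this ▸ (hT.ordConnected a).inter Set.ordConnected_Ioi
    · have : {k | SpineAnc T' a k} = {k | SpineAnc T a k} :=
        Set.ext fun k => rot_anc_iff_of_ne hcp hlt hT' (inl_injective.ne hac) (inl_injective.ne hap)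
      exact this ▸ hT.ordConnected a

theorem rot_isRotationAt : IsRotationAt (caterpillar n m) T T' (inl p) (inl c) := by
  refine ⟨hcp, hsupp.trans hT.supp_eq.symm, by rw [hT', rotParent_inl_c],
    rot_parent_inl_p hlt hT', fun x hxp hxc => ?_, fun x hxc hxp hx => ?_⟩
  · have hxc' : x ≠ inl c := by
      rintro rfl
      exact T.parent_ne_self _ hxc
    rw [hT', hT.exists_adj_inl_p_iff hcp hlt hxc]
    exact ⟨fun h => rotParent_of_moved hxp ⟨hxc, h⟩,
      fun h => (rotParent_of_not_moved hxc' hxp fun hm => h hm.2).trans hxc⟩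
  · rw [hT', rotParent_of_not_moved hxc hxp fun hm => hx hm.1]

theorem rot_isRotationAt_symm : IsRotationAt (caterpillar n m) T' T (inl c) (inl p) := by
  have hp' := rot_parent_inl_p hlt hT'
  refine ⟨hp', hT.supp_eq.trans hsupp.symm, by rw [hT', rotParent_inl_c], hcp,
    fun x hxc hx => ?_, fun x hxp hxc hx => ?_⟩
  · rw [hT'] at hx
    rcases rotParent_cases (T := T) hlt.ne x with
      ⟨rfl, -⟩ | ⟨rfl, h⟩ | ⟨hxp, ⟨hxc', hcx⟩, -⟩ | ⟨-, hxp, -, h⟩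
    · exact absurd rfl hxc
    · exact absurd (inl_injective (Option.some_injective _ (h.symm.trans hx))) hlt.ne
    · refine ⟨fun _ => hxc', fun hn => absurd ?_ hn⟩
      obtain ⟨q, rfl⟩ : ∃ q, x = inl q := by
        rcases x with q | l
        · exact ⟨q, rfl⟩
        · simp [spineIdx, (by simpa [hT.parent_inr l] using hxc' : l.1 = c)] at hcx
      obtain ⟨k, hk⟩ : ∃ k : Fin n, k.val = c.val + 1 := ⟨⟨c.val + 1, by omega⟩, rfl⟩
      simp only [spineIdx] at hcx
      have hqk : SpineAnc T q k := hT.spineAnc_of_lt_of_le hxc' (by omega) (by omega)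
      exact ⟨inl k, (rot_anc_iff_of_ne hcp hlt hT' (inl_injective.ne hcx.ne') hxp).2 hqk,
        .inr hk.symm⟩
    · have hxp' : T.parent x = some (inl p) := h ▸ hx
      exact ⟨fun hn => absurd hn (hT.rot_not_exists_adj_inl_c hcp hlt hT' hxp' hxc),
        fun _ => hxp'⟩
  · rw [hT']
    rcases rotParent_cases (T := T) hlt.ne x with
      ⟨rfl, -⟩ | ⟨rfl, -⟩ | ⟨-, -, h⟩ | ⟨-, -, -, h⟩
    · exact absurd rfl hxc
    · exact absurd rfl hxp
    · exact absurd (hT' ▸ h) hx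
    · exact h.symm

end Rotated

end IsBoundLegTree

end Rotation

/-- In the binary-search-tree picture of the spine: the path from the root that always
turns towards larger indices. -/
def rightSpine (T : RTree (CatV n m)) : Set (Fin n) := {v | ∀ a, SpineAnc T a v → a ≤ v}

namespace IsBoundLegTree

variable {T T' : RTree (CatV n m)} {c p : Fin n}

theorem rot_rightSpine_subset (hT : IsBoundLegTree T) (hcp : T.parent (inl c) = some (inl p))
    (hlt : c < p) (hT' : T'.parent = rotParent T c p) : rightSpine T ⊆ rightSpine T' :=
  fun v hv a ha => by
    obtain ⟨b, hab, hb⟩ := hT.exists_le_spineAnc_of_rot hcp hlt hT' ha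
    exact hab.trans (hv b hb)

theorem rot_mem_rightSpine (hT : IsBoundLegTree T) (hcp : T.parent (inl c) = some (inl p))
    (hlt : c < p) (hT' : T'.parent = rotParent T c p) (hp : p ∈ rightSpine T) :
    c ∈ rightSpine T' := by
  intro a ha
  by_cases hac : a = c
  · exact hac.le
  by_cases hap : a = p
  · subst hap
    exact absurd ((hT.rot_spineAnc_inl_p_iff hcp hlt hT').1 ha).2 (lt_irrefl c)
  have hac' := (rot_anc_iff_of_ne hcp hlt hT' (inl_injective.ne hac) (inl_injective.ne hap)).1 ha
  have hap' : SpineAnc T a p :=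
    ((RTree.anc_iff_of_parent_eq hcp).1 hac').resolve_left (inl_injective.ne hac)
  by_contra hca
  exact hap (hT.eq_of_mem_uIcc hap' (.of_parent_eq hcp)
    (Set.mem_uIcc.2 (.inr ⟨(not_le.1 hca).le, hp a hap'⟩)))

theorem exists_parent_eq_of_rightSpine_ne_univ (hT : IsBoundLegTree T)
    (hR : rightSpine T ≠ Set.univ) :
    ∃ c p, T.parent (inl c) = some (inl p) ∧ c ∉ rightSpine T ∧ p ∈ rightSpine T := by
  obtain ⟨v, hv⟩ := (Set.ne_univ_iff_exists_notMem _).1 hR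
  obtain ⟨r, -, hr, hvr⟩ := T.reaches_root (inl v) (hT.supp_eq ▸ Finset.mem_univ _)
  obtain ⟨j, rfl⟩ := hT.noFreeLegs.exists_eq_inl_of_anc hvr
  have hj : j ∈ rightSpine T := fun a ha =>
    (inl_injective (RTree.eq_of_anc_of_parent_eq_none hr ha)).le
  obtain ⟨x, y, hxv, hxy, hx, ⟨p, rfl, hp⟩⟩ := RTree.exists_parent_eq_of_anc
    (fun x => ∃ i, x = inl i ∧ i ∈ rightSpine T) hvr ⟨j, rfl, hj⟩
    (by rintro ⟨i, hi, hiR⟩; exact hv (inl_injective hi ▸ hiR))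
  obtain ⟨c, rfl⟩ := hT.noFreeLegs.exists_eq_inl_of_anc hxv
  exact ⟨c, p, hxy, fun hc => hx ⟨c, rfl, hc⟩, hp⟩

theorem exists_rotation (hT : IsBoundLegTree T) (hR : rightSpine T ≠ Set.univ) :
    ∃ T', IsBoundLegTree T' ∧ rightSpine T ⊂ rightSpine T' ∧
      IsRotation (caterpillar n m) T T' ∧ IsRotation (caterpillar n m) T' T := by
  obtain ⟨c, p, hcp, hc, hp⟩ := hT.exists_parent_eq_of_rightSpine_ne_univ hR
  have hlt : c < p := by
    obtain ⟨a, hac, hca⟩ : ∃ a, SpineAnc T a c ∧ c < a := by simpa [rightSpine] using hc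
    exact hca.trans_le
      (hp a (((RTree.anc_iff_of_parent_eq hcp).1 hac).resolve_left (inl_injective.ne hca.ne')))
  obtain ⟨T', hsupp, hT'⟩ := hT.exists_rotParent hcp hlt
  exact ⟨T', hT.rot hcp hlt hT' hsupp,
    (Set.ssubset_iff_of_subset (hT.rot_rightSpine_subset hcp hlt hT')).2
      ⟨c, hT.rot_mem_rightSpine hcp hlt hT' hp, hc⟩,
    ⟨_, _, hT.rot_isRotationAt hcp hlt hT' hsupp⟩,
    ⟨_, _, hT.rot_isRotationAt_symm hcp hlt hT' hsupp⟩⟩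

theorem exists_reachesIn_rightSpine_eq_univ (hT : IsBoundLegTree T) :
    ∃ C, IsBoundLegTree C ∧ rightSpine C = Set.univ ∧
      ∃ k ≤ n, ReachesIn (caterpillar n m) k T C ∧ ReachesIn (caterpillar n m) k C T := by
  suffices ∀ d T, IsBoundLegTree T → n ≤ (rightSpine T).ncard + d → ∃ C, IsBoundLegTree C ∧
      rightSpine C = Set.univ ∧
      ∃ k ≤ d, ReachesIn (caterpillar n m) k T C ∧ ReachesIn (caterpillar n m) k C T from
    this n T hT (by omega)
  intro d
  induction d with
  | zero =>
    intro T hT hd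
    refine ⟨T, hT, by_contra fun hR => ?_, 0, le_rfl, rfl, rfl⟩
    have := Set.ncard_lt_ncard (Set.ssubset_univ_iff.2 hR)
    simp only [Set.ncard_univ, Nat.card_eq_fintype_card, Fintype.card_fin] at this
    omega
  | succ d ih =>
    intro T hT hd
    by_cases hR : rightSpine T = Set.univ
    · exact ⟨T, hT, hR, 0, by omega, rfl, rfl⟩
    obtain ⟨T', hT', hss, h₁, h₂⟩ := hT.exists_rotation hR
    obtain ⟨C, hC, hCR, k, hk, hT'C, hCT'⟩ := ih T' hT' (by have := Set.ncard_lt_ncard hss; omega)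
    exact ⟨C, hC, hCR, k + 1, by omega, ⟨T', h₁, hT'C⟩, hCT'.trans (.single h₂)⟩

theorem parent_inl_of_rightSpine_eq_univ (hT : IsBoundLegTree T) (hR : rightSpine T = Set.univ)
    (i : Fin n) :
    T.parent (inl i) = if i.val = 0 then none else some (inl ⟨i.val - 1, by omega⟩) := by
  have hR' : ∀ a v, SpineAnc T a v → a ≤ v := fun a v => (hR ▸ Set.mem_univ v : v ∈ rightSpine T) a
  have hpar : ∀ {w}, T.parent (inl i) = some w → ∃ k, w = inl k ∧ k < i := fun hw => by
    obtain ⟨k, rfl⟩ := hT.noFreeLegs.exists_eq_inl_of_anc (RTree.anc_of_parent_eq hw)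
    exact ⟨k, rfl, lt_of_le_of_ne (hR' k i (.of_parent_eq hw)) fun h => T.parent_ne_self _ (h ▸ hw)⟩
  split_ifs with h0
  · cases hw : T.parent (inl i) with
    | none => rfl
    | some w =>
      obtain ⟨k, -, hk⟩ := hpar hw
      omega
  · obtain ⟨j, hj⟩ : ∃ j : Fin n, j.val + 1 = i.val := ⟨⟨i.val - 1, by omega⟩, by simp; omega⟩
    have hji : SpineAnc T j i := (hT.spineAnc_or_spineAnc j i hj).resolve_right fun h => by
      have := hR' i j h
      omega
    obtain ⟨w, hw, hjw⟩ := (ReflTransGen.cases_head hji).resolve_left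
      (inl_injective.ne fun h => by omega)
    obtain ⟨k, rfl, hk⟩ := hpar hw
    have hjk := hR' j k hjw
    rw [hw]
    congr 2
    exact Fin.ext (by dsimp only; omega)

theorem eq_of_rightSpine_eq_univ {T₁ T₂ : RTree (CatV n m)} (h₁ : IsBoundLegTree T₁)
    (h₂ : IsBoundLegTree T₂) (hR₁ : rightSpine T₁ = Set.univ) (hR₂ : rightSpine T₂ = Set.univ) :
    T₁ = T₂ := by
  refine RTree.ext (h₁.supp_eq.trans h₂.supp_eq.symm) (funext fun v => ?_)
  rcases v with i | l
  · rw [h₁.parent_inl_of_rightSpine_eq_univ hR₁, h₂.parent_inl_of_rightSpine_eq_univ hR₂]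
  · rw [h₁.parent_inr, h₂.parent_inr]

end IsBoundLegTree

end Caterpillar

/-- two search trees on a caterpillar with all leg nodes bound are at
rotation distance `O(n)`. -/
theorem bound_legs_linear_distance :
    ∃ c : ℝ, 0 < c ∧
      ∀ (n : ℕ), 1 ≤ n → ∀ (m : Fin n → ℕ),
        ∀ T1 T2 : RTree (CatV n m),
          IsSTG (caterpillar n m) T1 → IsSTG (caterpillar n m) T2 →
          noFreeLegs T1 → noFreeLegs T2 →
          ∃ k : ℕ, ReachesIn (caterpillar n m) k T1 T2 ∧ (k : ℝ) ≤ c * n := by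
  refine ⟨2, two_pos, fun n _ m T₁ T₂ hS₁ hS₂ hF₁ hF₂ => ?_⟩
  obtain ⟨C₁, hC₁, hR₁, k₁, hk₁, hT₁C₁, -⟩ :=
    (isBoundLegTree_of_isSTG hS₁ hF₁).exists_reachesIn_rightSpine_eq_univ
  obtain ⟨C₂, hC₂, hR₂, k₂, hk₂, -, hC₂T₂⟩ :=
    (isBoundLegTree_of_isSTG hS₂ hF₂).exists_reachesIn_rightSpine_eq_univ
  rw [hC₁.eq_of_rightSpine_eq_univ hC₂ hR₁ hR₂] at hT₁C₁
  refine ⟨k₁ + k₂, hT₁C₁.trans hC₂T₂, ?_⟩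
  have : k₁ + k₂ ≤ 2 * n := by omega
  exact_mod_cast this
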